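/- (Guy–Smith Periodicity Theorem) Let Γ be an octal game with octal code 0.d₁d₂...d_k, where d_k ≠ 0 and d_i = 0 for all i > k, and let H_n denote the Γ-heap of size n. Suppose that for some n₀ > 0 and p > 0, the Grundy values satisfy 𝒢(H_{n+p}) = 𝒢(H_n) for every n with n₀ ≤ n < 2n₀ + p + k. Then 𝒢(H_{n+p}) = 𝒢(H_n) for all n ≥ n₀. -/

import Mathlib

universe u

namespace SetTheory

/-- Mathlib's former `SetTheory.PGame` (removed from Mathlib), restored with its old definition. -/
inductive PGame : Type (u + 1)
  | mk : ∀ α β : Type u, (α → PGame) → (β → PGame) → PGame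

namespace PGame

instance : Zero PGame :=
  ⟨⟨PEmpty, PEmpty, PEmpty.elim, PEmpty.elim⟩⟩

noncomputable instance : Add PGame.{u} :=
  ⟨fun x y => by
    induction x generalizing y with | mk xl xr _ _ IHxl IHxr => _
    induction y with | mk yl yr yL yR IHyl IHyr => _
    have y := mk yl yr yL yR
    refine ⟨xl ⊕ yl, xr ⊕ yr, Sum.rec ?_ ?_, Sum.rec ?_ ?_⟩
    · exact fun i => IHxl i y
    · exact IHyl
    · exact fun i => IHxr i y
    · exact IHyr⟩

/-- The former `SetTheory.PGame.grundyValue`: the mex (`Ordinal.mex`, i.e.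
`sInf (Set.range f)ᶜ`) of the Grundy values of the left options. -/
noncomputable def grundyValue : PGame.{u} → Ordinal.{u}
  | mk _ _ L _ => sInf (Set.range fun i => grundyValue (L i))ᶜ

end PGame

end SetTheory

open SetTheory PGame

/-- The heap `H n` of the octal game with code digits `d 1, d 2, d 3, …`
(the value `d 0` is irrelevant: removals of `j` boxes are only allowed for `j ≥ 1`).
Writing `d j = ε₀ + 2·ε₁ + 4·ε₂`, a move removing `j` boxes from a heap of size `n` may go:
* to the empty position `0`, if `j = n` and `ε₀ = 1`;
* to the single heap `H (n - j)`, if `n - j ≥ 1` and `ε₁ = 1`;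
* to the sum `H a + H b` with `a, b ≥ 1` and `a + b = n - j`, if `ε₂ = 1`. -/
noncomputable def octalHeap (d : ℕ → ℕ) : ℕ → PGame.{0}
  | n =>
    PGame.mk
      ({ j : ℕ // j = n ∧ 1 ≤ j ∧ (d j).testBit 0 } ⊕
        ({ j : ℕ // 1 ≤ j ∧ j + 1 ≤ n ∧ (d j).testBit 1 } ⊕
          { q : ℕ × ℕ × ℕ //
              1 ≤ q.1 ∧ 1 ≤ q.2.1 ∧ 1 ≤ q.2.2 ∧ q.1 + q.2.1 + q.2.2 = n ∧
                (d q.1).testBit 2 }))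
      ({ j : ℕ // j = n ∧ 1 ≤ j ∧ (d j).testBit 0 } ⊕
        ({ j : ℕ // 1 ≤ j ∧ j + 1 ≤ n ∧ (d j).testBit 1 } ⊕
          { q : ℕ × ℕ × ℕ //
              1 ≤ q.1 ∧ 1 ≤ q.2.1 ∧ 1 ≤ q.2.2 ∧ q.1 + q.2.1 + q.2.2 = n ∧
                (d q.1).testBit 2 }))
      (fun i =>
        match i with
        | Sum.inl _ => 0
        | Sum.inr (Sum.inl ⟨j, _hj⟩) => octalHeap d (n - j)
        | Sum.inr (Sum.inr ⟨⟨_, a, b⟩, _hq⟩) => octalHeap d a + octalHeap d b)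
      (fun i =>
        match i with
        | Sum.inl _ => 0
        | Sum.inr (Sum.inl ⟨j, _hj⟩) => octalHeap d (n - j)
        | Sum.inr (Sum.inr ⟨⟨_, a, b⟩, _hq⟩) => octalHeap d a + octalHeap d b)
termination_by n => n
decreasing_by all_goals (simp_all; omega)

/-!
The Grundy value of a heap `H n` is the mex of the values of its options, and the value of a
sum `H a + H b` is the nim-sum of the values of `H a` and `H b`, so it is determined by them.
Removing `j ≤ k` boxes from `H (n + p)`, with `n ≥ 2 n₀ + p + k`, leaves either one heap of size
`n + p - j ≥ n₀ + p`, or two heaps of which the larger has size at least `n₀ + p`. Shrinking that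
heap by `p` gives an option of `H n` with the same Grundy value, by periodicity below `n`;
conversely, enlarging the larger heap of an option of `H n` by `p` gives an option of `H (n + p)`
with the same value. Hence `H (n + p)` and `H n` have the same option values,
and periodicity propagates by strong induction on `n`.
-/

noncomputable def mex (S : Set Ordinal.{u}) : Ordinal.{u} :=
  sInf Sᶜ

theorem mex_notMem (S : Set Ordinal.{u}) [Small.{u} S] : mex S ∉ S :=
  csInf_mem (s := Sᶜ) (nonempty_of_not_bddAbove (Ordinal.not_bddAbove_compl_of_small S))

theorem mem_of_lt_mex {S : Set Ordinal.{u}} {c : Ordinal.{u}} (h : c < mex S) : c ∈ S :=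
  not_not.1 (notMem_of_lt_csInf' h)

theorem mex_eq_of_notMem_of_Iio_subset {S : Set Ordinal.{u}} {c : Ordinal.{u}} (hc : c ∉ S)
    (hlt : Set.Iio c ⊆ S) : mex S = c :=
  IsLeast.csInf_eq ⟨hc, fun _ hx => not_lt.1 fun h => hx (hlt h)⟩

noncomputable def nimAdd (a b : Ordinal.{u}) : Ordinal.{u} :=
  mex (Set.range (fun a' : Set.Iio a => nimAdd a' b) ∪ Set.range (fun b' : Set.Iio b => nimAdd a b'))
termination_by (a, b)
decreasing_by
  · exact Prod.Lex.left _ _ a'.2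
  · exact Prod.Lex.right _ b'.2

theorem nimAdd_eq (a b : Ordinal.{u}) : nimAdd a b =
    mex (Set.range (fun a' : Set.Iio a => nimAdd a' b) ∪
      Set.range (fun b' : Set.Iio b => nimAdd a b')) := by
  rw [nimAdd]

theorem nimAdd_ne_of_lt_left {a a' : Ordinal.{u}} (b : Ordinal.{u}) (h : a' < a) :
    nimAdd a' b ≠ nimAdd a b := by
  intro he
  have hmem : nimAdd a' b ∈ Set.range (fun a' : Set.Iio a => nimAdd a' b) ∪
      Set.range (fun b' : Set.Iio b => nimAdd a b') := Or.inl ⟨⟨a', h⟩, rfl⟩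
  rw [he, nimAdd_eq] at hmem
  exact mex_notMem _ hmem

theorem nimAdd_ne_of_lt_right (a : Ordinal.{u}) {b b' : Ordinal.{u}} (h : b' < b) :
    nimAdd a b' ≠ nimAdd a b := by
  intro he
  have hmem : nimAdd a b' ∈ Set.range (fun a' : Set.Iio a => nimAdd a' b) ∪
      Set.range (fun b' : Set.Iio b => nimAdd a b') := Or.inr ⟨⟨b', h⟩, rfl⟩
  rw [he, nimAdd_eq] at hmem
  exact mex_notMem _ hmem

theorem nimAdd_left_injective (b : Ordinal.{u}) : Function.Injective (nimAdd · b) := by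
  intro a a' h
  by_contra hne
  rcases lt_or_gt_of_ne hne with hlt | hlt
  exacts [nimAdd_ne_of_lt_left b hlt h, nimAdd_ne_of_lt_left b hlt h.symm]

theorem nimAdd_right_injective (a : Ordinal.{u}) : Function.Injective (nimAdd a) := by
  intro b b' h
  by_contra hne
  rcases lt_or_gt_of_ne hne with hlt | hlt
  exacts [nimAdd_ne_of_lt_right a hlt h, nimAdd_ne_of_lt_right a hlt h.symm]

theorem exists_of_lt_nimAdd {a b c : Ordinal.{u}} (h : c < nimAdd a b) :
    (∃ a' < a, nimAdd a' b = c) ∨ (∃ b' < b, nimAdd a b' = c) := by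
  rw [nimAdd_eq] at h
  rcases mem_of_lt_mex h with ⟨⟨a', ha'⟩, rfl⟩ | ⟨⟨b', hb'⟩, rfl⟩
  exacts [Or.inl ⟨a', ha', rfl⟩, Or.inr ⟨b', hb', rfl⟩]

theorem mex_union_image_nimAdd (S T : Set Ordinal.{u}) [Small.{u} S] [Small.{u} T] :
    mex ((nimAdd · (mex T)) '' S ∪ nimAdd (mex S) '' T) = nimAdd (mex S) (mex T) := by
  apply mex_eq_of_notMem_of_Iio_subset
  · rintro (⟨a, ha, he⟩ | ⟨b, hb, he⟩)
    · exact mex_notMem S (nimAdd_left_injective _ he ▸ ha)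
    · exact mex_notMem T (nimAdd_right_injective _ he ▸ hb)
  · intro c hc
    rcases exists_of_lt_nimAdd hc with ⟨a, ha, rfl⟩ | ⟨b, hb, rfl⟩
    exacts [Or.inl ⟨a, mem_of_lt_mex ha, rfl⟩, Or.inr ⟨b, mem_of_lt_mex hb, rfl⟩]

theorem grundyValue_mk {α β : Type u} (L : α → PGame.{u}) (R : β → PGame.{u}) :
    grundyValue (PGame.mk α β L R) = mex (Set.range fun i => grundyValue (L i)) := by
  rw [grundyValue, mex]

theorem grundyValue_zero : grundyValue (0 : PGame.{u}) = 0 :=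
  mex_eq_of_notMem_of_Iio_subset (by rintro ⟨⟨⟩, _⟩) fun c hc => by simp at hc

theorem mk_add_mk {xl xr yl yr : Type u} (xL : xl → PGame.{u}) (xR : xr → PGame.{u})
    (yL : yl → PGame.{u}) (yR : yr → PGame.{u}) :
    PGame.mk xl xr xL xR + PGame.mk yl yr yL yR =
      PGame.mk (xl ⊕ yl) (xr ⊕ yr)
        (Sum.elim (fun i => xL i + PGame.mk yl yr yL yR) (fun j => PGame.mk xl xr xL xR + yL j))
        (Sum.elim (fun i => xR i + PGame.mk yl yr yL yR) (fun j => PGame.mk xl xr xL xR + yR j)) :=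
  rfl

theorem grundyValue_add (G H : PGame.{u}) :
    grundyValue (G + H) = nimAdd (grundyValue G) (grundyValue H) := by
  induction G generalizing H with
  | mk xl xr xL xR IHxl _ =>
  induction H with
  | mk yl yr yL yR IHyl _ =>
  rw [mk_add_mk, grundyValue_mk, grundyValue_mk xL, grundyValue_mk yL, ← mex_union_image_nimAdd,
    ← grundyValue_mk xL xR, ← grundyValue_mk yL yR, ← Set.range_comp', ← Set.range_comp',
    ← Set.Sum.elim_range]
  congr 2
  funext i
  rcases i with i | j
  exacts [IHxl i _, IHyl j]

theorem grundyValue_add_congr {G G' H H' : PGame.{u}} (hG : grundyValue G = grundyValue G')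
    (hH : grundyValue H = grundyValue H') : grundyValue (G + H) = grundyValue (G' + H') := by
  rw [grundyValue_add, grundyValue_add, hG, hH]

section Octal

def octalOptionValues (d : ℕ → ℕ) (n : ℕ) : Set Ordinal.{0} :=
  {x | (1 ≤ n ∧ (d n).testBit 0 ∧ x = 0) ∨
    (∃ j, 1 ≤ j ∧ j + 1 ≤ n ∧ (d j).testBit 1 ∧ x = grundyValue (octalHeap d (n - j))) ∨
    (∃ j a b, 1 ≤ j ∧ 1 ≤ a ∧ 1 ≤ b ∧ j + a + b = n ∧ (d j).testBit 2 ∧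
      x = grundyValue (octalHeap d a + octalHeap d b))}

theorem grundyValue_octalHeap (d : ℕ → ℕ) (n : ℕ) :
    grundyValue (octalHeap d n) = mex (octalOptionValues d n) := by
  rw [octalHeap, grundyValue_mk]
  congr 1
  ext x
  constructor
  · rintro ⟨⟨j, rfl, h1, h0⟩ | ⟨j, h1, hj, h2⟩ | ⟨⟨j, a, b⟩, h1, ha, hb, hsum, h4⟩, rfl⟩
    · exact Or.inl ⟨h1, h0, grundyValue_zero⟩
    · exact Or.inr (Or.inl ⟨j, h1, hj, h2, rfl⟩)
    · exact Or.inr (Or.inr ⟨j, a, b, h1, ha, hb, hsum, h4, rfl⟩)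
  · rintro (⟨h1, h0, rfl⟩ | ⟨j, h1, hj, h2, rfl⟩ | ⟨j, a, b, h1, ha, hb, hsum, h4, rfl⟩)
    · exact ⟨Sum.inl ⟨n, rfl, h1, h0⟩, grundyValue_zero⟩
    · exact ⟨Sum.inr (Sum.inl ⟨j, h1, hj, h2⟩), rfl⟩
    · exact ⟨Sum.inr (Sum.inr ⟨⟨j, a, b⟩, h1, ha, hb, hsum, h4⟩), rfl⟩

variable {d : ℕ → ℕ} {k n₀ p n : ℕ}

theorem le_of_testBit_of_eq_zero_of_lt (hk : ∀ i, k < i → d i = 0) {j b : ℕ}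
    (h : (d j).testBit b) : j ≤ k := by
  by_contra hj
  rw [hk j (not_le.1 hj), Nat.zero_testBit] at h
  exact Bool.false_ne_true h

theorem octalOptionValues_add_subset (hk : ∀ i, k < i → d i = 0) (hn₀ : 0 < n₀)
    (hn : 2 * n₀ + p + k ≤ n) (hper : ∀ m, n₀ ≤ m → m < n →
      grundyValue (octalHeap d (m + p)) = grundyValue (octalHeap d m)) :
    octalOptionValues d (n + p) ⊆ octalOptionValues d n := by
  rintro x (⟨-, h0, -⟩ | ⟨j, h1, -, h2, rfl⟩ | ⟨j, a, b, h1, ha, hb, hsum, h4, rfl⟩)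
  · have := le_of_testBit_of_eq_zero_of_lt hk h0
    omega
  · have hj := le_of_testBit_of_eq_zero_of_lt hk h2
    refine Or.inr (Or.inl ⟨j, h1, by omega, h2, ?_⟩)
    rw [show n + p - j = n - j + p by omega, hper (n - j) (by omega) (by omega)]
  · have hj := le_of_testBit_of_eq_zero_of_lt hk h4
    rcases le_total a b with hab | hab
    · refine Or.inr (Or.inr ⟨j, a, b - p, h1, ha, by omega, by omega, h4, ?_⟩)
      refine grundyValue_add_congr rfl ?_
      rw [← hper (b - p) (by omega) (by omega), Nat.sub_add_cancel (by omega)]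
    · refine Or.inr (Or.inr ⟨j, a - p, b, h1, by omega, hb, by omega, h4, ?_⟩)
      refine grundyValue_add_congr ?_ rfl
      rw [← hper (a - p) (by omega) (by omega), Nat.sub_add_cancel (by omega)]

theorem octalOptionValues_subset_add (hk : ∀ i, k < i → d i = 0) (hn₀ : 0 < n₀)
    (hn : 2 * n₀ + p + k ≤ n) (hper : ∀ m, n₀ ≤ m → m < n →
      grundyValue (octalHeap d (m + p)) = grundyValue (octalHeap d m)) :
    octalOptionValues d n ⊆ octalOptionValues d (n + p) := by
  rintro x (⟨-, h0, -⟩ | ⟨j, h1, -, h2, rfl⟩ | ⟨j, a, b, h1, ha, hb, hsum, h4, rfl⟩)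
  · have := le_of_testBit_of_eq_zero_of_lt hk h0
    omega
  · have hj := le_of_testBit_of_eq_zero_of_lt hk h2
    refine Or.inr (Or.inl ⟨j, h1, by omega, h2, ?_⟩)
    rw [show n + p - j = n - j + p by omega, hper (n - j) (by omega) (by omega)]
  · have hj := le_of_testBit_of_eq_zero_of_lt hk h4
    rcases le_total a b with hab | hab
    · refine Or.inr (Or.inr ⟨j, a, b + p, h1, ha, by omega, by omega, h4, ?_⟩)
      exact grundyValue_add_congr rfl (hper b (by omega) (by omega)).symm
    · refine Or.inr (Or.inr ⟨j, a + p, b, h1, by omega, hb, by omega, h4, ?_⟩)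
      exact grundyValue_add_congr (hper a (by omega) (by omega)).symm rfl

theorem grundyValue_octalHeap_add_period (hk : ∀ i, k < i → d i = 0) (hn₀ : 0 < n₀)
    (hn : 2 * n₀ + p + k ≤ n) (hper : ∀ m, n₀ ≤ m → m < n →
      grundyValue (octalHeap d (m + p)) = grundyValue (octalHeap d m)) :
    grundyValue (octalHeap d (n + p)) = grundyValue (octalHeap d n) := by
  rw [grundyValue_octalHeap, grundyValue_octalHeap,
    (octalOptionValues_add_subset hk hn₀ hn hper).antisymm
      (octalOptionValues_subset_add hk hn₀ hn hper)]

end Octal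

theorem guy_smith_periodicity_general (d : ℕ → ℕ)
    (k : ℕ) (hk' : ∀ i, k < i → d i = 0)
    (n₀ p : ℕ) (hn₀ : 0 < n₀)
    (hper : ∀ n, n₀ ≤ n → n < 2 * n₀ + p + k →
      grundyValue (octalHeap d (n + p)) = grundyValue (octalHeap d n)) :
    ∀ n, n₀ ≤ n → grundyValue (octalHeap d (n + p)) = grundyValue (octalHeap d n) := by
  intro n
  induction n using Nat.strong_induction_on with
  | _ n ih =>
    intro hn
    rcases lt_or_ge n (2 * n₀ + p + k) with hsmall | hlarge
    · exact hper n hn hsmall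
    · exact grundyValue_octalHeap_add_period hk' hn₀ hlarge fun m hm hmn => ih m hmn hm

/-- **Guy–Smith Periodicity Theorem.** Let `Γ` be an octal game with code
`0.d₁d₂…d_k` where `d_k ≠ 0` and `d_i = 0` for `i > k`, and let `H n` be the heap of
size `n`.  If for some `n₀ > 0` and `p > 0` the Grundy values satisfy
`𝒢(H (n+p)) = 𝒢(H n)` for every `n` with `n₀ ≤ n < 2n₀ + p + k`, then
`𝒢(H (n+p)) = 𝒢(H n)` for all `n ≥ n₀`. -/
theorem guy_smith_periodicity (d : ℕ → ℕ) (hd : ∀ j, d j < 8)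
    (k : ℕ) (hk1 : 1 ≤ k) (hk : d k ≠ 0) (hk' : ∀ i, k < i → d i = 0)
    (n₀ p : ℕ) (hn₀ : 0 < n₀) (hp : 0 < p)
    (hper : ∀ n, n₀ ≤ n → n < 2 * n₀ + p + k →
      grundyValue (octalHeap d (n + p)) = grundyValue (octalHeap d n)) :
    ∀ n, n₀ ≤ n → grundyValue (octalHeap d (n + p)) = grundyValue (octalHeap d n) :=
  guy_smith_periodicity_general d k hk' n₀ p hn₀ hper
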